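/- arXiv:1610.02088 — 2 statements merged into one kernel-verified Lean document; each statement's English description precedes it below -/
import Mathlib

section
/- Let $b > 0$ and let $\beta : [0,\infty) \to (0,\infty)$ be decreasing with $\sum_{m=1}^\infty m\beta^2(m) < \infty$. Then $\sum_{m=1}^\infty e^{-2bm}\int_0^{m+1} \beta^2(s)e^{2bs}\, ds < \infty$. -/
set_option maxHeartbeats 1000000


open Real Filter intervalIntegral

private lemma sum_half (d : ℕ → ℝ) (hd : Summable d) :
    Summable (fun m : ℕ => d ((m + 1) / 2)) := by
  have he : Summable (fun k : ℕ => d ((2 * k + 1) / 2)) := by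
    have : (fun k : ℕ => d ((2 * k + 1) / 2)) = fun k => d k := by
      funext k; congr 1; omega
    rw [this]; exact hd
  have ho : Summable (fun k : ℕ => d ((2 * k + 1 + 1) / 2)) := by
    have : (fun k : ℕ => d ((2 * k + 1 + 1) / 2)) = fun k => d (k + 1) := by
      funext k; congr 1; omega
    rw [this]; exact (summable_nat_add_iff 1).2 hd
  exact Summable.even_add_odd he ho

theorem stmt_2 (b : ℝ) (hb : 0 < b) (β : ℝ → ℝ)
    (hanti : AntitoneOn β (Set.Ici 0)) (hpos : ∀ t : ℝ, 0 ≤ t → 0 < β t)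
    (hsum : Summable fun m : ℕ => (m : ℝ) * β m ^ 2) :
    Summable fun m : ℕ =>
      exp (-(2 * b * m)) * ∫ s in (0 : ℝ)..((m : ℝ) + 1), β s ^ 2 * exp (2 * b * s) := by
  have hβnn : ∀ t : ℝ, 0 ≤ t → 0 ≤ β t := fun t ht => (hpos t ht).le
  -- summability of βk²
  have hd0 : Summable (fun k : ℕ => β k ^ 2) := by
    rw [← summable_nat_add_iff 1]
    refine Summable.of_nonneg_of_le (f := fun k : ℕ => ((k : ℝ) + 1) * β (k + 1 : ℕ) ^ 2)
      (fun k => sq_nonneg _) ?_ ?_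
    · intro k
      have h1 : (1 : ℝ) ≤ (k : ℝ) + 1 := by
        have := Nat.cast_nonneg (α := ℝ) k; linarith
      nlinarith [sq_nonneg (β ((k + 1 : ℕ) : ℝ))]
    · have := (summable_nat_add_iff 1).2 hsum
      simpa using this
  have hd : Summable (fun k : ℕ => (2 * (k : ℝ) + 1) * β k ^ 2) := by
    have : (fun k : ℕ => (2 * (k : ℝ) + 1) * β k ^ 2)
        = fun k : ℕ => 2 * ((k : ℝ) * β k ^ 2) + β k ^ 2 := by
      funext k; ring
    rw [this]
    exact (hsum.mul_left 2).add hd0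
  have hd2 : Summable (fun m : ℕ =>
      (2 * (((m + 1) / 2 : ℕ) : ℝ) + 1) * β (((m + 1) / 2 : ℕ) : ℝ) ^ 2) :=
    sum_half _ hd
  -- geometric part
  have hr1 : exp (-b) < 1 := exp_lt_one_iff.2 (by linarith)
  have hr : ‖exp (-b)‖ < 1 := by
    rw [Real.norm_eq_abs, abs_of_pos (exp_pos _)]; exact hr1
  have hA : Summable (fun m : ℕ => ((m : ℝ) + 1) * exp (-b) ^ m) := by
    have h1 := summable_pow_mul_geometric_of_norm_lt_one (R := ℝ) 1 hr
    have h2 : Summable (fun m : ℕ => exp (-b) ^ m) :=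
      summable_geometric_of_lt_one (exp_pos _).le hr1
    have : (fun m : ℕ => ((m : ℝ) + 1) * exp (-b) ^ m)
        = fun m : ℕ => (m : ℝ) ^ 1 * exp (-b) ^ m + exp (-b) ^ m := by
      funext m; ring
    rw [this]
    exact h1.add h2
  -- the dominating sequence
  apply Summable.of_nonneg_of_le
    (f := fun m : ℕ => β 0 ^ 2 * exp b * (((m : ℝ) + 1) * exp (-b) ^ m)
      + exp (2 * b) * ((2 * (((m + 1) / 2 : ℕ) : ℝ) + 1) * β (((m + 1) / 2 : ℕ) : ℝ) ^ 2))
  · intro m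
    apply mul_nonneg (exp_pos _).le
    apply intervalIntegral.integral_nonneg (by positivity)
    intro u hu
    exact mul_nonneg (sq_nonneg _) (exp_pos _).le
  · intro m
    set T : ℝ := (m : ℝ) + 1 with hT
    set k : ℕ := (m + 1) / 2 with hk
    have hTnn : (0 : ℝ) ≤ T := by positivity
    have hkT : 2 * (k : ℝ) ≤ T := by
      have : 2 * k ≤ m + 1 := by omega
      calc 2 * (k : ℝ) = ((2 * k : ℕ) : ℝ) := by push_cast; ring
        _ ≤ ((m + 1 : ℕ) : ℝ) := by exact_mod_cast this
        _ = T := by push_cast; ring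
    set C : ℝ := β 0 ^ 2 * exp (b * T) + β k ^ 2 * exp (2 * b * T) with hC
    have hbound : ∀ x ∈ Set.uIoc (0 : ℝ) T, ‖β x ^ 2 * exp (2 * b * x)‖ ≤ C := by
      intro x hx
      rw [Set.uIoc_of_le hTnn] at hx
      have hx0 : 0 < x := hx.1
      have hxT : x ≤ T := hx.2
      rw [norm_eq_abs, abs_of_nonneg (mul_nonneg (sq_nonneg _) (exp_pos _).le)]
      rcases le_total x (k : ℝ) with h | h
      · have hβ : β x ^ 2 ≤ β 0 ^ 2 := by
          have := hanti (Set.self_mem_Ici) (Set.mem_Ici.2 hx0.le) hx0.le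
          exact pow_le_pow_left₀ (hβnn x hx0.le) this 2
        have hexp : exp (2 * b * x) ≤ exp (b * T) := by
          apply exp_le_exp.2
          nlinarith
        have : β x ^ 2 * exp (2 * b * x) ≤ β 0 ^ 2 * exp (b * T) :=
          mul_le_mul hβ hexp (exp_pos _).le (sq_nonneg _)
        have h2 : (0 : ℝ) ≤ β (k : ℝ) ^ 2 * exp (2 * b * T) :=
          mul_nonneg (sq_nonneg _) (exp_pos _).le
        linarith
      · have hβ : β x ^ 2 ≤ β (k : ℝ) ^ 2 := by
          have := hanti (Set.mem_Ici.2 (Nat.cast_nonneg k)) (Set.mem_Ici.2 hx0.le) h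
          exact pow_le_pow_left₀ (hβnn x hx0.le) this 2
        have hexp : exp (2 * b * x) ≤ exp (2 * b * T) := by
          apply exp_le_exp.2; nlinarith
        have : β x ^ 2 * exp (2 * b * x) ≤ β (k : ℝ) ^ 2 * exp (2 * b * T) :=
          mul_le_mul hβ hexp (exp_pos _).le (sq_nonneg _)
        have h2 : (0 : ℝ) ≤ β 0 ^ 2 * exp (b * T) :=
          mul_nonneg (sq_nonneg _) (exp_pos _).le
        linarith
    have hint : (∫ s in (0 : ℝ)..T, β s ^ 2 * exp (2 * b * s)) ≤ C * T := by
      calc (∫ s in (0 : ℝ)..T, β s ^ 2 * exp (2 * b * s))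
          ≤ ‖∫ s in (0 : ℝ)..T, β s ^ 2 * exp (2 * b * s)‖ := le_norm_self _
        _ ≤ C * |T - 0| := intervalIntegral.norm_integral_le_of_norm_le_const hbound
        _ = C * T := by rw [sub_zero, abs_of_nonneg hTnn]
    calc exp (-(2 * b * m)) * ∫ s in (0 : ℝ)..T, β s ^ 2 * exp (2 * b * s)
        ≤ exp (-(2 * b * m)) * (C * T) :=
          mul_le_mul_of_nonneg_left hint (exp_pos _).le
      _ = β 0 ^ 2 * (exp (-(2 * b * m)) * exp (b * T)) * T
          + β (k : ℝ) ^ 2 * (exp (-(2 * b * m)) * exp (2 * b * T)) * T := by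
          rw [hC]; ring
      _ = β 0 ^ 2 * (exp b * exp (-b) ^ m) * T
          + β (k : ℝ) ^ 2 * exp (2 * b) * T := by
          congr 2
          · rw [← Real.exp_nat_mul, ← Real.exp_add, ← Real.exp_add]
            congr 1
            rw [hT]; ring
          · rw [← Real.exp_add]
            congr 1
            rw [hT]; ring
      _ ≤ β 0 ^ 2 * exp b * (T * exp (-b) ^ m)
          + exp (2 * b) * ((2 * (k : ℝ) + 1) * β (k : ℝ) ^ 2) := by
          have hT2 : T ≤ 2 * (k : ℝ) + 1 := by
            have : m + 1 ≤ 2 * k + 1 := by omega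
            calc T = ((m + 1 : ℕ) : ℝ) := by rw [hT]; push_cast; ring
              _ ≤ ((2 * k + 1 : ℕ) : ℝ) := by exact_mod_cast this
              _ = 2 * (k : ℝ) + 1 := by push_cast; ring
          have h1 : β (k : ℝ) ^ 2 * exp (2 * b) * T
              ≤ exp (2 * b) * ((2 * (k : ℝ) + 1) * β (k : ℝ) ^ 2) := by
            have := mul_le_mul_of_nonneg_left hT2
              (mul_nonneg (sq_nonneg (β (k : ℝ))) (exp_pos (2 * b)).le)
            nlinarith
          have h2 : β 0 ^ 2 * (exp b * exp (-b) ^ m) * T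
              = β 0 ^ 2 * exp b * (T * exp (-b) ^ m) := by ring
          linarith [h2.le]
  · exact ((hA.mul_left _).add (hd2.mul_left _))
end

section
/- Let $(X,Y)$ be a bivariate normal vector with standard normal marginals and correlation $\rho$ with $|\rho| < 1/2$. Then there is an absolute constant $C > 0$ such that for every Borel set $B \subset \mathbb{R}$, $|\mathrm{Cov}(1_B(X), 1_B(Y))| \le C|\rho|$. -/
open MeasureTheory Real


lemma exp_sub_one_le (t : ℝ) (ht : 0 ≤ t) : Real.exp t - 1 ≤ t * Real.exp t := by
  have h2 : Real.exp (-t) = (Real.exp t)⁻¹ := Real.exp_neg t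
  have h3 : 1 - t ≤ (Real.exp t)⁻¹ := by rw [← h2]; linarith [Real.add_one_le_exp (-t)]
  have h4 : (1 - t) * Real.exp t ≤ (Real.exp t)⁻¹ * Real.exp t :=
    mul_le_mul_of_nonneg_right h3 (Real.exp_pos t).le
  rw [inv_mul_cancel₀ (Real.exp_ne_zero t)] at h4
  nlinarith

lemma abs_exp_sub_exp_le (u v : ℝ) : |Real.exp u - Real.exp v| ≤ |u - v| * Real.exp (max u v) := by
  wlog h : v ≤ u
  · have := this v u (le_of_not_ge h)
    rwa [abs_sub_comm, abs_sub_comm v u, max_comm] at this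
  have h1 : Real.exp v ≤ Real.exp u := Real.exp_le_exp.mpr h
  rw [abs_of_nonneg (by linarith), abs_of_nonneg (by linarith), max_eq_left h]
  have h2 : Real.exp (u - v) - 1 ≤ (u - v) * Real.exp (u - v) := exp_sub_one_le _ (by linarith)
  have h3 : Real.exp v * (Real.exp (u - v) - 1) ≤ Real.exp v * ((u - v) * Real.exp (u - v)) :=
    mul_le_mul_of_nonneg_left h2 (Real.exp_pos v).le
  have h4 : Real.exp v * (Real.exp (u - v) - 1) = Real.exp u - Real.exp v := by
    rw [mul_sub, ← Real.exp_add]; ring_nf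
  have h5 : Real.exp v * ((u - v) * Real.exp (u - v)) = (u - v) * Real.exp u := by
    rw [mul_comm (u - v), ← mul_assoc, ← Real.exp_add]; ring_nf
  linarith


set_option maxHeartbeats 2000000 in
lemma pointwise_bound (ρ x y : ℝ) (hρ : |ρ| < 1/2) :
    |1 / (2 * π * Real.sqrt (1 - ρ ^ 2)) * exp (-((x ^ 2 + y ^ 2 - 2 * ρ * x * y) / (2 * (1 - ρ ^ 2))))
      - exp (-(x ^ 2 / 2)) / Real.sqrt (2 * π) * (exp (-(y ^ 2 / 2)) / Real.sqrt (2 * π))|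
    ≤ |ρ| * ((1 + 2 * (x ^ 2 + y ^ 2)) * exp (-((x ^ 2 + y ^ 2) / 4)) / (2 * π)) := by
  have hπ : 0 < π := Real.pi_pos
  have hρ2 : ρ^2 < 1/4 := by
    have := abs_nonneg ρ; nlinarith [sq_abs ρ]
  have hd : (0:ℝ) < 1 - ρ^2 := by nlinarith
  set r := x ^ 2 + y ^ 2 with hr_def
  set s := Real.sqrt (1 - ρ^2) with hs_def
  have hs2 : s^2 = 1 - ρ^2 := Real.sq_sqrt hd.le
  have hs_pos : 0 < s := Real.sqrt_pos.mpr hd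
  have hs_le1 : s ≤ 1 := by nlinarith [sq_nonneg ρ]
  have hs_half : 1/2 ≤ s := by nlinarith
  have hr0 : 0 ≤ r := by positivity
  have hxy1 : 2*(x*y) ≤ r := by rw [hr_def]; nlinarith [sq_nonneg (x - y)]
  have hxy2 : -r ≤ 2*(x*y) := by rw [hr_def]; nlinarith [sq_nonneg (x + y)]
  have hρa : 0 ≤ |ρ| := abs_nonneg ρ
  have hρ1 : ρ ≤ |ρ| := le_abs_self ρ
  have hρ1' : -|ρ| ≤ ρ := neg_abs_le ρ
  have hρh : |ρ| < 1/2 := hρ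
  set Q := (r - 2 * ρ * x * y) / (2 * (1 - ρ ^ 2)) with hQ_def
  clear_value r s Q
  have hQlb : r/4 ≤ Q := by
    rw [hQ_def, le_div_iff₀ (by nlinarith : (0:ℝ) < 2*(1-ρ^2))]
    nlinarith [mul_nonneg (by linarith : (0:ℝ) ≤ 1/2 + ρ) (by linarith : 0 ≤ r - 2*(x*y)),
      mul_nonneg (by linarith : (0:ℝ) ≤ 1/2 - ρ) (by linarith : 0 ≤ r + 2*(x*y)),
      le_abs_self ρ, neg_abs_le ρ]
  have hQdiff : |Q - r/2| ≤ 2 * |ρ| * r := by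
    have heq : Q - r/2 = (ρ^2 * r - ρ * (2*(x*y))) / (2*(1-ρ^2)) := by
      rw [hQ_def]; field_simp; ring
    rw [heq, abs_div, abs_of_pos (by nlinarith : (0:ℝ) < 2*(1-ρ^2)),
      div_le_iff₀ (by nlinarith : (0:ℝ) < 2*(1-ρ^2))]
    have habsxy : |2*(x*y)| ≤ r := abs_le.mpr ⟨by linarith, by linarith⟩
    have h1 : |ρ^2 * r - ρ * (2*(x*y))| ≤ ρ^2 * r + |ρ| * r := by
      refine (abs_sub _ _).trans ?_
      rw [abs_mul, abs_mul, abs_of_nonneg (by positivity : (0:ℝ) ≤ ρ^2), abs_of_nonneg hr0]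
      have := mul_le_mul_of_nonneg_left habsxy hρa
      linarith
    have hρsq : ρ^2 ≤ |ρ| * (1/2) := by nlinarith [sq_abs ρ]
    have hd34 : (3:ℝ)/4 ≤ 1 - ρ^2 := by nlinarith
    nlinarith [mul_nonneg (mul_nonneg hρa hr0) (by linarith : (0:ℝ) ≤ (1 - ρ^2) - 3/4)]
  have hsinv : s⁻¹ ≤ 1 + |ρ| := by
    have hcube : 0 ≤ 2 - 2*|ρ|^2 - |ρ|^3 := by nlinarith [sq_abs ρ, mul_nonneg hρa hρa]
    have h0 : 1 ≤ (1 - ρ^2) * (1 + |ρ|)^2 := by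
      nlinarith [mul_nonneg hρa hcube, sq_abs ρ]
    have h2 : 1/(1+|ρ|) ≤ s := by
      rw [hs_def]
      refine (Real.le_sqrt (by positivity) hd.le).mpr ?_
      rw [div_pow, one_pow, div_le_iff₀ (by positivity)]
      linarith
    have h3 := one_div_le_one_div_of_le (by positivity : (0:ℝ) < 1/(1+|ρ|)) h2
    rw [one_div_one_div] at h3
    rw [inv_eq_one_div]
    exact h3
  have hsinv1 : 1 ≤ s⁻¹ := by
    rw [show (1:ℝ) = 1⁻¹ by norm_num]
    exact inv_anti₀ hs_pos hs_le1
  have hE1 : exp (-Q) ≤ exp (-(r/4)) := exp_le_exp.mpr (by linarith)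
  have hE0 : exp (-(r/2)) ≤ exp (-(r/4)) := exp_le_exp.mpr (by linarith)
  have hexp : |exp (-Q) - exp (-(r/2))| ≤ (2 * |ρ| * r) * exp (-(r/4)) := by
    refine (abs_exp_sub_exp_le _ _).trans ?_
    have h1 : |(-Q) - (-(r/2))| ≤ 2 * |ρ| * r := by
      rw [show (-Q) - (-(r/2)) = -(Q - r/2) by ring, abs_neg]; exact hQdiff
    have h2 : exp (max (-Q) (-(r/2))) ≤ exp (-(r/4)) :=
      exp_le_exp.mpr (max_le (by linarith) (by linarith))
    exact mul_le_mul h1 h2 (exp_pos _).le (by positivity)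
  have hphi : exp (-(x^2/2))/Real.sqrt (2*π) * (exp (-(y^2/2))/Real.sqrt (2*π))
      = (1/(2*π)) * exp (-(r/2)) := by
    rw [div_mul_div_comm, ← Real.exp_add, Real.mul_self_sqrt (by positivity),
      show -(x^2/2) + -(y^2/2) = -(r/2) by rw [hr_def]; ring]
    ring
  have hfρ : 1/(2*π*s) * exp (-Q) = (1/(2*π)) * (s⁻¹ * exp (-Q)) := by
    field_simp
  have key : |s⁻¹ * exp (-Q) - exp (-(r/2))| ≤ |ρ| * (1+2*r)*exp (-(r/4)) := by
    have hsplit : s⁻¹ * exp (-Q) - exp (-(r/2))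
        = (s⁻¹ - 1) * exp (-Q) + (exp (-Q) - exp (-(r/2))) := by ring
    rw [hsplit]
    refine (abs_add_le _ _).trans ?_
    have t1 : |(s⁻¹ - 1) * exp (-Q)| ≤ |ρ| * exp (-(r/4)) := by
      rw [abs_mul, abs_of_pos (exp_pos _), abs_of_nonneg (by linarith)]
      exact mul_le_mul (by linarith) hE1 (exp_pos _).le hρa
    have : |ρ| * (1+2*r)*exp (-(r/4)) = |ρ| * exp (-(r/4)) + (2 * |ρ| * r) * exp (-(r/4)) := by ring
    rw [this]
    exact add_le_add t1 hexp
  calc |1/(2*π*s) * exp (-Q) - exp (-(x^2/2))/Real.sqrt (2*π) * (exp (-(y^2/2))/Real.sqrt (2*π))|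
      = (1/(2*π)) * |s⁻¹ * exp (-Q) - exp (-(r/2))| := by
        rw [hfρ, hphi, ← mul_sub, abs_mul, abs_of_pos (by positivity : (0:ℝ) < 1/(2*π))]
    _ ≤ (1/(2*π)) * (|ρ| * (1+2*r)*exp (-(r/4))) := by
        exact mul_le_mul_of_nonneg_left key (by positivity)
    _ = |ρ| * ((1 + 2*r) * exp (-(r/4)) / (2*π)) := by ring


noncomputable def auxPhiD (x : ℝ) : ℝ := Real.exp (-(x ^ 2 / 2)) / Real.sqrt (2 * π)

noncomputable def auxGD (p : ℝ × ℝ) : ℝ :=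
  (1 + 2 * (p.1 ^ 2 + p.2 ^ 2)) * Real.exp (-((p.1 ^ 2 + p.2 ^ 2) / 4)) / (2 * π)


lemma auxPhiD_nonneg (x : ℝ) : 0 ≤ auxPhiD x := by unfold auxPhiD; positivity

lemma auxGD_nonneg (p : ℝ × ℝ) : 0 ≤ auxGD p := by
  unfold auxGD
  have := Real.pi_pos
  positivity

lemma auxPhiD_integrable : Integrable auxPhiD := by
  have h : Integrable (fun x : ℝ => Real.exp (-(1/2 : ℝ) * x ^ 2)) :=
    integrable_exp_neg_mul_sq (by norm_num)
  have h2 := h.div_const (Real.sqrt (2 * π))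
  have : auxPhiD = fun x : ℝ => Real.exp (-(1/2 : ℝ) * x ^ 2) / Real.sqrt (2 * π) := by
    funext x; unfold auxPhiD; ring_nf
  rw [this]; exact h2

lemma auxPhiD_integral : ∫ x : ℝ, auxPhiD x = 1 := by
  have : (fun x : ℝ => auxPhiD x) = fun x : ℝ => Real.exp (-(1/2 : ℝ) * x ^ 2) / Real.sqrt (2 * π) := by
    funext x; unfold auxPhiD; ring_nf
  rw [this, integral_div, integral_gaussian]
  rw [show π / (1/2 : ℝ) = 2 * π by ring]
  exact div_self (by positivity)

lemma gauss2_integrable {b : ℝ} (hb : 0 < b) :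
    Integrable (fun p : ℝ × ℝ => Real.exp (-(b * (p.1 ^ 2 + p.2 ^ 2)))) := by
  have h : Integrable (fun x : ℝ => Real.exp (-b * x ^ 2)) := integrable_exp_neg_mul_sq hb
  have h2 := h.mul_prod h
  rw [← Measure.volume_eq_prod] at h2
  have : (fun p : ℝ × ℝ => Real.exp (-(b * (p.1 ^ 2 + p.2 ^ 2))))
      = fun p : ℝ × ℝ => Real.exp (-b * p.1 ^ 2) * Real.exp (-b * p.2 ^ 2) := by
    funext p; rw [← Real.exp_add]; congr 1; ring
  rw [this]; exact h2

lemma auxGD_integrable : Integrable auxGD := by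
  have hπ := Real.pi_pos
  have hmaj := (gauss2_integrable (b := 1/8) (by norm_num)).const_mul (17 / (2 * π))
  refine hmaj.mono' ?_ (Filter.Eventually.of_forall fun p => ?_)
  · apply Continuous.aestronglyMeasurable; unfold auxGD; fun_prop
  · set r := p.1 ^ 2 + p.2 ^ 2 with hr
    have hr0 : 0 ≤ r := by positivity
    rw [Real.norm_eq_abs, abs_of_nonneg (auxGD_nonneg p)]
    unfold auxGD
    rw [← hr]
    have h1 : 1 + 2 * r ≤ 17 * Real.exp (r / 8) := by
      have := Real.add_one_le_exp (r / 8)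
      nlinarith [Real.exp_pos (r / 8)]
    have h2 : Real.exp (r / 8) * Real.exp (-(r / 4)) = Real.exp (-(1/8 * r)) := by
      rw [← Real.exp_add]; congr 1; ring
    have h3 : (1 + 2 * r) * Real.exp (-(r / 4)) ≤ 17 * Real.exp (-(1/8 * r)) := by
      calc (1 + 2 * r) * Real.exp (-(r / 4)) ≤ 17 * Real.exp (r / 8) * Real.exp (-(r / 4)) :=
            mul_le_mul_of_nonneg_right h1 (Real.exp_pos _).le
        _ = 17 * Real.exp (-(1/8 * r)) := by rw [mul_assoc, h2]
    rw [div_le_iff₀ (by positivity : (0:ℝ) < 2 * π)] at *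
    calc (1 + 2 * r) * Real.exp (-(r / 4))
        ≤ 17 * Real.exp (-(1/8 * r)) := h3
      _ = 17 / (2 * π) * Real.exp (-(1/8 * r)) * (2 * π) := by field_simp

noncomputable def auxDens (ρ : ℝ) (p : ℝ × ℝ) : ℝ :=
  1 / (2 * π * Real.sqrt (1 - ρ ^ 2)) *
    Real.exp (-((p.1 ^ 2 + p.2 ^ 2 - 2 * ρ * p.1 * p.2) / (2 * (1 - ρ ^ 2))))

theorem stmt_11 :
    ∃ C : ℝ, 0 < C ∧
      ∀ (Ω : Type) (_ : MeasurableSpace Ω) (P : Measure Ω), IsProbabilityMeasure P →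
        ∀ (ρ : ℝ) (X Y : Ω → ℝ), |ρ| < 1 / 2 →
          (Measure.map (fun ω => (X ω, Y ω)) P
            = volume.withDensity fun p : ℝ × ℝ => ENNReal.ofReal
                (1 / (2 * π * Real.sqrt (1 - ρ ^ 2)) *
                  exp (-((p.1 ^ 2 + p.2 ^ 2 - 2 * ρ * p.1 * p.2) / (2 * (1 - ρ ^ 2))))) ) →
          ∀ B : Set ℝ, MeasurableSet B →
            |(P {ω | X ω ∈ B ∧ Y ω ∈ B}).toReal
                - (P {ω | X ω ∈ B}).toReal * (P {ω | Y ω ∈ B}).toReal|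
              ≤ C * |ρ| := by
  set K : ℝ := ∫ p : ℝ × ℝ, auxGD p with hK_def
  have hK0 : 0 ≤ K := integral_nonneg auxGD_nonneg
  refine ⟨3 * K + 1, by linarith, ?_⟩
  intro Ω mΩ P hP ρ X Y hρ h B hB
  have hπ := Real.pi_pos
  have hρa : 0 ≤ |ρ| := abs_nonneg ρ
  have hd : (0:ℝ) < 1 - ρ ^ 2 := by nlinarith [sq_abs ρ]
  have hsq : (0:ℝ) < Real.sqrt (1 - ρ ^ 2) := Real.sqrt_pos.mpr hd
  -- densities
  have hfc : Continuous (auxDens ρ) := by unfold auxDens; fun_prop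
  have hf_pos : ∀ p, 0 < auxDens ρ p := by
    intro p; unfold auxDens; positivity
  have hf_nonneg : ∀ p, 0 ≤ auxDens ρ p := fun p => (hf_pos p).le
  -- rewrite h in terms of auxDens
  replace h : Measure.map (fun ω => (X ω, Y ω)) P
      = volume.withDensity fun p : ℝ × ℝ => ENNReal.ofReal (auxDens ρ p) := h
  -- the pair map is a.e.-measurable
  have hpair : AEMeasurable (fun ω => (X ω, Y ω)) P := by
    by_contra hm
    rw [Measure.map_of_not_aemeasurable hm] at h
    have h0 := congrArg (fun μ : Measure (ℝ × ℝ) => μ Set.univ) h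
    simp only [Measure.coe_zero, Pi.zero_apply] at h0
    rw [withDensity_apply _ MeasurableSet.univ, Measure.restrict_univ] at h0
    have hpos : 0 < ∫⁻ p : ℝ × ℝ, ENNReal.ofReal (auxDens ρ p) := by
      rw [lintegral_pos_iff_support (hfc.measurable.ennreal_ofReal)]
      have hsupp : (Function.support fun p : ℝ × ℝ => ENNReal.ofReal (auxDens ρ p)) = Set.univ := by
        ext p
        simp [Function.support, ENNReal.ofReal_eq_zero, not_le, hf_pos p]
      rw [hsupp]
      exact isOpen_univ.measure_pos volume Set.univ_nonempty
    exact absurd h0.symm hpos.ne'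
  -- conversion of probabilities to integrals
  have hconv : ∀ S : Set (ℝ × ℝ), MeasurableSet S →
      (P ((fun ω => (X ω, Y ω)) ⁻¹' S)).toReal = ∫ p in S, auxDens ρ p := by
    intro S hS
    rw [← Measure.map_apply_of_aemeasurable hpair hS, h, withDensity_apply _ hS]
    rw [integral_eq_lintegral_of_nonneg_ae (Filter.Eventually.of_forall hf_nonneg)
      hfc.aestronglyMeasurable.restrict]
  -- sets as preimages
  have hset1 : {ω | X ω ∈ B ∧ Y ω ∈ B} = (fun ω => (X ω, Y ω)) ⁻¹' (B ×ˢ B) := by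
    ext ω; simp [Set.mem_prod]
  have hset2 : {ω | X ω ∈ B} = (fun ω => (X ω, Y ω)) ⁻¹' (B ×ˢ Set.univ) := by
    ext ω; simp
  have hset3 : {ω | Y ω ∈ B} = (fun ω => (X ω, Y ω)) ⁻¹' (Set.univ ×ˢ B) := by
    ext ω; simp
  -- the independent density
  set f0 : ℝ × ℝ → ℝ := fun p => auxPhiD p.1 * auxPhiD p.2 with hf0_def
  have hf0_int : Integrable f0 := by
    have := auxPhiD_integrable.mul_prod auxPhiD_integrable
    rwa [← Measure.volume_eq_prod] at this
  have hf0_nonneg : ∀ p, 0 ≤ f0 p := fun p =>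
    mul_nonneg (auxPhiD_nonneg _) (auxPhiD_nonneg _)
  -- pointwise bound
  have hpt : ∀ p : ℝ × ℝ, |auxDens ρ p - f0 p| ≤ |ρ| * auxGD p := by
    intro p
    exact pointwise_bound ρ p.1 p.2 hρ
  -- integrability of auxDens ρ
  have hf_int : Integrable (auxDens ρ) := by
    refine (hf0_int.add (auxGD_integrable.const_mul |ρ|)).mono'
      hfc.aestronglyMeasurable (Filter.Eventually.of_forall fun p => ?_)
    have h1 := hpt p
    have h2 := le_abs_self (auxDens ρ p - f0 p)
    rw [Real.norm_eq_abs, abs_of_nonneg (hf_nonneg p)]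
    simp only [Pi.add_apply]
    linarith
  have hdiff_int : Integrable (fun p => |auxDens ρ p - f0 p|) := (hf_int.sub hf0_int).abs
  -- main estimate per set
  have hKest : ∀ S : Set (ℝ × ℝ), MeasurableSet S →
      |(∫ p in S, auxDens ρ p) - ∫ p in S, f0 p| ≤ |ρ| * K := by
    intro S hS
    rw [← integral_sub hf_int.integrableOn hf0_int.integrableOn]
    calc |∫ p in S, (auxDens ρ p - f0 p)|
        ≤ ∫ p in S, |auxDens ρ p - f0 p| := by
          simpa [Real.norm_eq_abs] using
            norm_integral_le_integral_norm (μ := volume.restrict S) (fun p => auxDens ρ p - f0 p)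
      _ ≤ ∫ p : ℝ × ℝ, |auxDens ρ p - f0 p| :=
          setIntegral_le_integral hdiff_int (Filter.Eventually.of_forall fun p => abs_nonneg _)
      _ ≤ ∫ p : ℝ × ℝ, |ρ| * auxGD p :=
          integral_mono hdiff_int (auxGD_integrable.const_mul |ρ|) hpt
      _ = |ρ| * K := by rw [integral_const_mul, hK_def]
  -- marginal quantities
  set q : ℝ := ∫ x in B, auxPhiD x with hq_def
  have hq0 : 0 ≤ q := setIntegral_nonneg hB fun x _ => auxPhiD_nonneg x
  have hq1 : q ≤ 1 := by
    rw [hq_def, ← auxPhiD_integral]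
    exact setIntegral_le_integral auxPhiD_integrable
      (Filter.Eventually.of_forall auxPhiD_nonneg)
  have hBB : ∫ p in B ×ˢ B, f0 p = q * q := by
    rw [hf0_def, Measure.volume_eq_prod, setIntegral_prod_mul]
  have hBu : ∫ p in B ×ˢ Set.univ, f0 p = q := by
    rw [hf0_def, Measure.volume_eq_prod, setIntegral_prod_mul, Measure.restrict_univ,
      auxPhiD_integral, mul_one]
  have huB : ∫ p in Set.univ ×ˢ B, f0 p = q := by
    rw [hf0_def, Measure.volume_eq_prod, setIntegral_prod_mul, Measure.restrict_univ,
      auxPhiD_integral, one_mul]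
  have e1 := hKest (B ×ˢ B) (hB.prod hB)
  have e2 := hKest (B ×ˢ Set.univ) (hB.prod MeasurableSet.univ)
  have e3 := hKest (Set.univ ×ˢ B) (MeasurableSet.univ.prod hB)
  rw [hBB] at e1; rw [hBu] at e2; rw [huB] at e3
  -- bounds on the marginals
  have ha0 : 0 ≤ ∫ p in B ×ˢ Set.univ, auxDens ρ p := by
    rw [← hconv _ (hB.prod MeasurableSet.univ)]; exact ENNReal.toReal_nonneg
  have ha1 : (∫ p in B ×ˢ Set.univ, auxDens ρ p) ≤ 1 := by
    rw [← hconv _ (hB.prod MeasurableSet.univ)]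
    calc (P _).toReal ≤ (1 : ENNReal).toReal :=
          ENNReal.toReal_mono ENNReal.one_ne_top prob_le_one
      _ = 1 := by simp
  -- final assembly
  rw [hset1, hset2, hset3, hconv _ (hB.prod hB), hconv _ (hB.prod MeasurableSet.univ),
    hconv _ (MeasurableSet.univ.prod hB)]
  set a := (∫ p in B ×ˢ Set.univ, auxDens ρ p) with ha_def
  set b := (∫ p in Set.univ ×ˢ B, auxDens ρ p) with hb_def
  set c := (∫ p in B ×ˢ B, auxDens ρ p) with hc_def
  have habs : |q * q - a * b| ≤ |q - a| + |q - b| := by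
    have hqa : |q * (q - a)| ≤ |q - a| := by
      rw [abs_mul, abs_of_nonneg hq0]
      exact mul_le_of_le_one_left (abs_nonneg _) hq1
    have hab : |a * (q - b)| ≤ |q - b| := by
      rw [abs_mul, abs_of_nonneg ha0]
      exact mul_le_of_le_one_left (abs_nonneg _) ha1
    calc |q * q - a * b| = |q * (q - a) + a * (q - b)| := by ring_nf
      _ ≤ |q * (q - a)| + |a * (q - b)| := abs_add_le _ _
      _ ≤ |q - a| + |q - b| := add_le_add hqa hab
  have e2' : |q - a| ≤ |ρ| * K := by rw [abs_sub_comm]; exact e2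
  have e3' : |q - b| ≤ |ρ| * K := by rw [abs_sub_comm]; exact e3
  calc |c - a * b| ≤ |c - q * q| + |q * q - a * b| := abs_sub_le c (q * q) (a * b)
    _ ≤ |ρ| * K + (|q - a| + |q - b|) := add_le_add e1 habs
    _ ≤ |ρ| * K + (|ρ| * K + |ρ| * K) := by linarith
    _ ≤ (3 * K + 1) * |ρ| := by nlinarith
end
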